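/- Define b_k = (-1)^k Σ_{m=0}^{⌊k/2⌋} (2m choose m)(-1/4)^m for k ∈ ℕ. Then the series Σ_{k=0}^∞ b_k/(k+1) converges. -/

import Mathlib

open Real Filter

noncomputable def bSeq (k : ℕ) : ℝ :=
  (-1) ^ k * ∑ m ∈ Finset.range (k / 2 + 1), (Nat.choose (2 * m) m : ℝ) * (-1 / 4) ^ m

/-!
With `c m = C(2m, m) / 4^m`, which decreases to `0`, the even terms `b_{2j}` are partial sums of
the alternating series `∑ (-1)^m c m`, hence lie in `[0, c 0] = [0, 1]`. Since
`b_{2j+1} = -b_{2j}`, the partial sums of `(b_k)` are bounded by `1`, and Dirichlet's test with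
the decreasing weights `1 / (k + 1)` gives convergence.
-/

open Finset

theorem Antitone.sum_range_neg_one_pow_mul_mem_Icc {R : Type*} [Ring R] [PartialOrder R]
    [IsOrderedRing R] {c : ℕ → R} (hc : Antitone c) (hc0 : ∀ m, 0 ≤ c m) (n : ℕ) :
    ∑ m ∈ range n, (-1) ^ m * c m ∈ Set.Icc 0 (c 0) := by
  -- Peeling off `c 0` leaves minus the alternating sum of the shifted sequence `c (· + 1)`.
  induction n generalizing c with
  | zero => simpa using hc0 0
  | succ n ih =>
    obtain ⟨hlo, hhi⟩ := ih (c := fun m ↦ c (m + 1)) (fun _ _ h ↦ hc (by omega)) (fun m ↦ hc0 _)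
    have hpeel : ∑ m ∈ range (n + 1), (-1) ^ m * c m
        = c 0 - ∑ m ∈ range n, (-1) ^ m * c (m + 1) := by
      simp only [sum_range_succ', pow_succ, mul_neg_one, neg_mul, sum_neg_distrib, pow_zero,
        one_mul, sub_eq_neg_add]
    rw [hpeel]
    exact ⟨sub_nonneg.2 (hhi.trans (hc (Nat.zero_le 1))), sub_le_self _ hlo⟩

theorem norm_sum_range_le_of_forall_odd_eq_neg {E : Type*} [SeminormedAddCommGroup E]
    {f : ℕ → E} {B : ℝ} (hf : ∀ j, f (2 * j + 1) = -f (2 * j)) (hB : ∀ j, ‖f (2 * j)‖ ≤ B)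
    (n : ℕ) : ‖∑ k ∈ range n, f k‖ ≤ B := by
  have heven : ∀ j, ∑ k ∈ range (2 * j), f k = 0 := by
    intro j
    induction j with
    | zero => simp
    | succ j ih => rw [Nat.mul_succ, sum_range_succ, sum_range_succ, ih, hf]; simp
  obtain ⟨j, rfl | rfl⟩ := Nat.even_or_odd' n
  · simpa [heven] using (norm_nonneg _).trans (hB 0)
  · simpa [sum_range_succ, heven] using hB j

theorem antitone_centralBinom_div_four_pow :
    Antitone fun m : ℕ ↦ (Nat.centralBinom m : ℝ) / 4 ^ m := by
  refine antitone_nat_of_succ_le fun m ↦ ?_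
  have hrec : ((m : ℝ) + 1) * Nat.centralBinom (m + 1) = 2 * (2 * m + 1) * Nat.centralBinom m := by
    exact_mod_cast Nat.succ_mul_centralBinom_succ m
  have hm : (0 : ℝ) < m + 1 := by positivity
  rw [div_le_div_iff₀ (by positivity) (by positivity), pow_succ, ← mul_le_mul_iff_of_pos_left hm]
  nlinarith [(Nat.centralBinom m).cast_nonneg (α := ℝ), pow_pos (four_pos (α := ℝ)) m]

theorem bSeq_two_mul (j : ℕ) :
    bSeq (2 * j) = ∑ m ∈ range (j + 1), (-1) ^ m * ((Nat.centralBinom m : ℝ) / 4 ^ m) := by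
  rw [bSeq, pow_mul, neg_one_sq, one_pow, one_mul, Nat.mul_div_cancel_left j two_pos]
  refine sum_congr rfl fun m _ ↦ ?_
  rw [Nat.centralBinom, div_pow]
  ring

theorem bSeq_two_mul_add_one (j : ℕ) : bSeq (2 * j + 1) = -bSeq (2 * j) := by
  rw [bSeq, bSeq, show (2 * j + 1) / 2 = 2 * j / 2 by omega, pow_succ]
  ring

theorem norm_bSeq_two_mul_le_one (j : ℕ) : ‖bSeq (2 * j)‖ ≤ 1 := by
  obtain ⟨hlo, hhi⟩ := antitone_centralBinom_div_four_pow.sum_range_neg_one_pow_mul_mem_Icc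
    (fun m ↦ by positivity) (j + 1)
  rw [bSeq_two_mul, Real.norm_of_nonneg hlo]
  simpa using hhi

theorem bSeq_series_converges :
    ∃ L : ℝ, Tendsto (fun n => ∑ k ∈ Finset.range n, bSeq k / (k + 1)) atTop (nhds L) := by
  have hanti : Antitone fun k : ℕ ↦ 1 / ((k : ℝ) + 1) := fun a b hab ↦ by dsimp only; gcongr
  have hcauchy := hanti.cauchySeq_series_mul_of_tendsto_zero_of_bounded
    tendsto_one_div_add_atTop_nhds_zero_nat
    (norm_sum_range_le_of_forall_odd_eq_neg bSeq_two_mul_add_one norm_bSeq_two_mul_le_one)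
  simp only [smul_eq_mul, one_div_mul_eq_div] at hcauchy
  exact cauchySeq_tendsto_of_complete hcauchy
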